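/- arXiv:2405.16449 — 2 statements merged into one kernel-verified Lean document; each statement's English description precedes it below -/
import Mathlib

section
/- Let ρ, ω, z ∈ ℝ, T > 0, σ ∈ ℝ, σ_J ≥ 0 with σ² + σ_J² > 0, and θ > 0. Set k := ρ²σ²/(σ²+σ_J²) and define V : [0,T]×ℝ → ℝ by V(t,x) = (x−ω)² exp(−k(T−t)) + (θk/4)(T²−t²) − (θ/2)(kT + ln(πθ/(σ²+σ_J²)))(T−t) − (ω−z)². Then: (i) V(T,x) = (x−ω)² − (ω−z)² for all x; (ii) ∂²_xV(t,x) = 2exp(−k(T−t)) > 0 for all (t,x); and (iii) for all (t,x) ∈ [0,T)×ℝ, ∂_tV(t,x) − (ρ²σ²/(2(σ²+σ_J²)))·(∂_xV(t,x))²/∂²_xV(t,x) − (θ/2)·ln( 2πθ/((σ²+σ_J²)·∂²_xV(t,x)) ) = 0. -/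
/-- The optimal exploratory value function of the entropy-regularized mean–variance
portfolio selection problem under a jump-diffusion market solves the exploratory HJB
equation.  Here `k = ρ²σ²/(σ²+σ_J²)`. -/
theorem stmt_5 (ρ ω z T σ σJ θ : ℝ) (hT : 0 < T) (hσJ : 0 ≤ σJ)
    (hpos : 0 < σ ^ 2 + σJ ^ 2) (hθ : 0 < θ)
    (k : ℝ) (hk : k = ρ ^ 2 * σ ^ 2 / (σ ^ 2 + σJ ^ 2))
    (V : ℝ → ℝ → ℝ)
    (hV : ∀ t x, V t x =
      (x - ω) ^ 2 * Real.exp (-k * (T - t)) + (θ * k / 4) * (T ^ 2 - t ^ 2)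
        - (θ / 2) * (k * T + Real.log (Real.pi * θ / (σ ^ 2 + σJ ^ 2))) * (T - t)
        - (ω - z) ^ 2) :
    (∀ x, V T x = (x - ω) ^ 2 - (ω - z) ^ 2) ∧
    (∀ t x, deriv (deriv (fun y => V t y)) x = 2 * Real.exp (-k * (T - t)) ∧
      0 < deriv (deriv (fun y => V t y)) x) ∧
    (∀ t ∈ Set.Ico (0 : ℝ) T, ∀ x,
      deriv (fun s => V s x) t
        - (ρ ^ 2 * σ ^ 2 / (2 * (σ ^ 2 + σJ ^ 2)))
            * (deriv (fun y => V t y) x) ^ 2 / (deriv (deriv (fun y => V t y)) x)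
        - (θ / 2) * Real.log (2 * Real.pi * θ
            / ((σ ^ 2 + σJ ^ 2) * deriv (deriv (fun y => V t y)) x)) = 0) := by
  set S : ℝ := σ ^ 2 + σJ ^ 2 with hS
  set L : ℝ := Real.log (Real.pi * θ / S) with hL
  -- first spatial derivative
  have hx1 : ∀ t x, deriv (fun y => V t y) x = 2 * (x - ω) * Real.exp (-k * (T - t)) := by
    intro t x
    have hfun : (fun y => V t y) = fun y =>
        (y - ω) ^ 2 * Real.exp (-k * (T - t)) + ((θ * k / 4) * (T ^ 2 - t ^ 2)
          - (θ / 2) * (k * T + L) * (T - t) - (ω - z) ^ 2) := by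
      funext y; rw [hV]; ring
    rw [hfun]
    have h1 : HasDerivAt (fun y : ℝ => (y - ω) ^ 2 * Real.exp (-k * (T - t)) +
        ((θ * k / 4) * (T ^ 2 - t ^ 2) - (θ / 2) * (k * T + L) * (T - t) - (ω - z) ^ 2))
        (2 * (x - ω) * Real.exp (-k * (T - t))) x := by
      have := (((hasDerivAt_id x).sub_const ω).pow 2).mul_const (Real.exp (-k * (T - t)))
      simpa [mul_comm, mul_assoc, mul_left_comm] using this.add_const ((θ * k / 4) * (T ^ 2 - t ^ 2) - (θ / 2) * (k * T + L) * (T - t) - (ω - z) ^ 2)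
    exact h1.deriv
  -- second spatial derivative
  have hx2 : ∀ t x, deriv (deriv (fun y => V t y)) x = 2 * Real.exp (-k * (T - t)) := by
    intro t x
    have hfun : deriv (fun y => V t y) = fun y => 2 * (y - ω) * Real.exp (-k * (T - t)) :=
      funext fun y => hx1 t y
    rw [hfun]
    have h1 : HasDerivAt (fun y : ℝ => 2 * (y - ω) * Real.exp (-k * (T - t)))
        (2 * Real.exp (-k * (T - t))) x := by
      have := (((hasDerivAt_id x).sub_const ω).const_mul 2).mul_const (Real.exp (-k * (T - t)))
      simpa using this
    exact h1.deriv
  refine ⟨fun x => by rw [hV]; simp, fun t x => ⟨hx2 t x, by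
    rw [hx2]; positivity⟩, ?_⟩
  intro t _ x
  -- time derivative
  have ht1 : deriv (fun s => V s x) t =
      (x - ω) ^ 2 * (k * Real.exp (-k * (T - t))) - θ * k / 2 * t + (θ / 2) * (k * T + L) := by
    have hfun : (fun s => V s x) = fun s =>
        (x - ω) ^ 2 * Real.exp (-k * (T - s)) + (θ * k / 4) * (T ^ 2 - s ^ 2)
          - (θ / 2) * (k * T + L) * (T - s) - (ω - z) ^ 2 := funext fun s => hV s x
    rw [hfun]
    have h1 : HasDerivAt (fun s : ℝ => -k * (T - s)) k t := by
      have := ((hasDerivAt_const t T).sub (hasDerivAt_id t)).const_mul (-k)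
      simpa using this
    have h2 : HasDerivAt (fun s : ℝ => (x - ω) ^ 2 * Real.exp (-k * (T - s)))
        ((x - ω) ^ 2 * (k * Real.exp (-k * (T - t)))) t := by
      have := (h1.exp).const_mul ((x - ω) ^ 2)
      simpa [mul_comm, mul_left_comm] using this
    have h3 : HasDerivAt (fun s : ℝ => (θ * k / 4) * (T ^ 2 - s ^ 2))
        (-(θ * k / 2 * t)) t := by
      have := ((hasDerivAt_const t (T ^ 2)).sub ((hasDerivAt_id t).pow 2)).const_mul (θ * k / 4)
      refine this.congr_deriv ?_; simp [id]; ring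
    have h4 : HasDerivAt (fun s : ℝ => (θ / 2) * (k * T + L) * (T - s))
        (-((θ / 2) * (k * T + L))) t := by
      have := ((hasDerivAt_const t T).sub (hasDerivAt_id t)).const_mul ((θ / 2) * (k * T + L))
      simpa using this
    have h := ((h2.add h3).sub h4).sub_const ((ω - z) ^ 2)
    refine h.deriv.trans ?_; ring
  rw [ht1, hx1, hx2]
  have he : (0:ℝ) < Real.exp (-k * (T - t)) := Real.exp_pos _
  have hπθS : (0:ℝ) < Real.pi * θ / S := by positivity
  have hlog : Real.log (2 * Real.pi * θ / (S * (2 * Real.exp (-k * (T - t))))) =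
      L + k * (T - t) := by
    have harg : 2 * Real.pi * θ / (S * (2 * Real.exp (-k * (T - t)))) =
        (Real.pi * θ / S) * Real.exp (k * (T - t)) := by
      have hSne : S ≠ 0 := ne_of_gt hpos
      have hene : Real.exp (-k * (T - t)) ≠ 0 := Real.exp_ne_zero _
      rw [show k * (T - t) = -(-k * (T - t)) by ring, Real.exp_neg]
      field_simp
    rw [harg, Real.log_mul (ne_of_gt hπθS) (Real.exp_ne_zero _), Real.log_exp, hL]
  rw [hlog]
  have hSne : S ≠ 0 := ne_of_gt hpos
  have hk' : ρ ^ 2 * σ ^ 2 = k * S := by rw [hk]; field_simp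
  rw [hk']
  field_simp
  ring
end

section
/- Let φ : ℝ → ℝ be differentiable and suppose there exist functions h₁, h₂ : ℝ → ℝ such that φ(x + a²) − φ(x) − a²·φ'(x) = a²·h₁(x) + a·h₂(x) for all x ∈ ℝ and all a ∈ ℝ. Then h₂(x) = 0 and h₁(x) = 0 for all x, and φ' is constant; i.e., φ is affine: φ(x) = φ(0) + φ'(0)·x for all x ∈ ℝ. -/
open Set

private lemma affine_on_Ici (c : ℝ) (x : ℝ) (ψ : ℝ → ℝ)
    (hk : ∀ t ≥ 0, ψ (x + t) = ψ x + t * c) :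
    ∀ u ∈ Ici x, ψ u = ψ x + (u - x) * c := by
  intro u hu
  have := hk (u - x) (by simpa using hu)
  simpa using this

/-- Rigidity step of the paper's counterexample: if a differentiable `φ` satisfies
`φ(x+a²) − φ(x) − a²·φ'(x) = a²·h₁(x) + a·h₂(x)` for all `x, a`, then `h₁ ≡ h₂ ≡ 0`
and `φ` is affine. -/
theorem stmt_9 (φ h₁ h₂ : ℝ → ℝ) (hφ : Differentiable ℝ φ)
    (h : ∀ x a : ℝ, φ (x + a ^ 2) - φ x - a ^ 2 * deriv φ x = a ^ 2 * h₁ x + a * h₂ x) :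
    (∀ x, h₂ x = 0) ∧ (∀ x, h₁ x = 0) ∧ (∀ x, deriv φ x = deriv φ 0) ∧
    (∀ x, φ x = φ 0 + deriv φ 0 * x) := by
  have hh2 : ∀ x, h₂ x = 0 := by
    intro x
    have e1 := h x 1
    have e2 := h x (-1)
    norm_num at e1 e2
    linarith
  -- key identity for t ≥ 0
  have key : ∀ x : ℝ, ∀ t ≥ (0:ℝ), φ (x + t) = φ x + t * (deriv φ x + h₁ x) := by
    intro x t ht
    have := h x (Real.sqrt t)
    rw [Real.sq_sqrt ht, hh2 x] at this
    ring_nf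
    ring_nf at this
    linarith
  -- h₁ = 0 : compare derivatives within Ici x at x
  have hh1 : ∀ x, h₁ x = 0 := by
    intro x
    set c := deriv φ x + h₁ x with hc
    have haff : ∀ u ∈ Ici x, φ u = φ x + (u - x) * c := affine_on_Ici c x φ (key x)
    have hlin : HasDerivWithinAt φ c (Ici x) x := by
      have hd : HasDerivAt (fun u => φ x + (u - x) * c) c x := by
        simpa using (((hasDerivAt_id x).sub_const x).mul_const c).const_add (φ x)
      exact hd.hasDerivWithinAt.congr haff (haff x self_mem_Ici)
    have hD : HasDerivWithinAt φ (deriv φ x) (Ici x) x :=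
      (hφ x).hasDerivAt.hasDerivWithinAt
    have := (uniqueDiffOn_Ici x x self_mem_Ici).eq_deriv _ hD hlin
    linarith [this, hc]
  have key' : ∀ x : ℝ, ∀ t ≥ (0:ℝ), φ (x + t) = φ x + t * deriv φ x := by
    intro x t ht
    have := key x t ht
    rw [hh1 x] at this
    simpa using this
  -- deriv constant on the right
  have dconst : ∀ x y : ℝ, x < y → deriv φ y = deriv φ x := by
    intro x y hxy
    have haff : ∀ u ∈ Ici x, φ u = φ x + (u - x) * deriv φ x :=
      affine_on_Ici _ x φ (key' x)
    have hmem : Ici x ∈ nhds y := Ici_mem_nhds hxy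
    have heq : φ =ᶠ[nhds y] fun u => φ x + (u - x) * deriv φ x :=
      Filter.eventuallyEq_of_mem hmem haff
    have : deriv φ y = deriv (fun u => φ x + (u - x) * deriv φ x) y :=
      heq.deriv_eq
    rw [this]
    have hd : HasDerivAt (fun u => φ x + (u - x) * deriv φ x) (deriv φ x) y := by
      simpa using (((hasDerivAt_id y).sub_const x).mul_const (deriv φ x)).const_add (φ x)
    exact hd.deriv
  have dall : ∀ x, deriv φ x = deriv φ 0 := by
    intro x
    rcases lt_trichotomy x 0 with hx | hx | hx
    · exact (dconst x 0 hx).symm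
    · rw [hx]
    · exact dconst 0 x hx
  refine ⟨hh2, hh1, dall, ?_⟩
  intro x
  rcases le_or_gt 0 x with hx | hx
  · have := key' 0 x hx
    rw [dall 0] at this
    simp at this
    linarith
  · have := key' x (-x) (by linarith)
    rw [dall x] at this
    simp at this
    linarith
end
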